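/- The group presented by ⟨a, b | a^4, b^4, (ab)^2, (a⁻¹b)^2⟩ has order 16. -/

import Mathlib

/-- The relations of the group `B_2 = ⟨a, b | a⁴, b⁴, (ab)², (a⁻¹b)²⟩`. -/
def B2Rels : Set (FreeGroup (Fin 2)) :=
  {FreeGroup.of 0 ^ 4, FreeGroup.of 1 ^ 4,
   (FreeGroup.of 0 * FreeGroup.of 1) ^ 2,
   ((FreeGroup.of 0)⁻¹ * FreeGroup.of 1) ^ 2}

/-!
The relations give `b a = a⁻¹ b⁻¹ = a³ b³` and make `b²` commute with `a`, hence
`b aᵏ = a³ᵏ b¹⁺²ᵏ`. So the sixteen words `aⁱ bʲ` (`0 ≤ i, j < 4`) form a set containing `1`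
and stable under left multiplication by `a` and `b`; it is therefore the whole group.
They are pairwise distinct because their images under a homomorphism to `Equiv.Perm (Fin 8)`
are.
-/

namespace B2

variable {G : Type*} [Group G] {a b : G}

theorem pow_eq_pow_of_natCast_eq {n k m : ℕ} (ha : a ^ n = 1) (h : (k : ZMod n) = m) :
    a ^ k = a ^ m :=
  pow_eq_pow_iff_modEq.mpr <|
    ((ZMod.natCast_eq_natCast_iff k m n).mp h).of_dvd (orderOf_dvd_of_pow_eq_one ha)

theorem inv_eq_pow_three (ha : a ^ 4 = 1) : a⁻¹ = a ^ 3 :=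
  inv_eq_of_mul_eq_one_right (by rw [← pow_succ', ha])

theorem inv_sq_eq_sq (ha : a ^ 4 = 1) : a⁻¹ ^ 2 = a ^ 2 := by
  rw [inv_pow, inv_eq_of_mul_eq_one_right (b := a ^ 2) (by rw [← pow_add, ha])]

theorem mul_eq_inv_mul_inv_of_sq_eq_one (h : (a * b) ^ 2 = 1) : b * a = a⁻¹ * b⁻¹ :=
  calc b * a = a⁻¹ * (a * b * (a * b)) * b⁻¹ := by group
    _ = a⁻¹ * b⁻¹ := by rw [← sq, h, mul_one]

theorem commute_sq (hb : b ^ 4 = 1) (hab : (a * b) ^ 2 = 1) (hab' : (a⁻¹ * b) ^ 2 = 1) :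
    Commute (b ^ 2) a :=
  calc b ^ 2 * a = b * (b * a) := by rw [sq, mul_assoc]
    _ = b * a⁻¹ * b⁻¹ := by rw [mul_eq_inv_mul_inv_of_sq_eq_one hab, mul_assoc]
    _ = a * b⁻¹ ^ 2 := by
      rw [mul_eq_inv_mul_inv_of_sq_eq_one hab', inv_inv, mul_assoc, sq]
    _ = a * b ^ 2 := by rw [inv_sq_eq_sq hb]

theorem mul_pow_eq_pow_mul_pow (ha : a ^ 4 = 1) (hb : b ^ 4 = 1) (hab : (a * b) ^ 2 = 1)
    (hab' : (a⁻¹ * b) ^ 2 = 1) (k : ℕ) : b * a ^ k = a ^ (3 * k) * b ^ (1 + 2 * k) := by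
  have hba : b * a = a ^ 3 * b ^ 3 := by
    rw [mul_eq_inv_mul_inv_of_sq_eq_one hab, inv_eq_pow_three ha, inv_eq_pow_three hb]
  induction k with
  | zero => simp
  | succ k ih =>
    calc b * a ^ (k + 1) = a ^ (3 * k) * (b ^ 2) ^ k * (b * a) := by
          rw [pow_succ, ← mul_assoc, ih, pow_add, pow_one, ← pow_mul]; group
      _ = a ^ (3 * k) * a ^ 3 * ((b ^ 2) ^ k * b ^ 3) := by
          rw [hba, ← mul_assoc, mul_assoc _ _ (a ^ 3),
            ((commute_sq hb hab hab').pow_pow k 3).eq]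
          group
      _ = a ^ (3 * (k + 1)) * b ^ (1 + 2 * (k + 1)) := by
          rw [← pow_mul, ← pow_add, ← pow_add]; ring_nf

def normalForm (a b : G) (p : ZMod 4 × ZMod 4) : G := a ^ p.1.val * b ^ p.2.val

theorem map_normalForm {H : Type*} [Group H] (f : G →* H) (p : ZMod 4 × ZMod 4) :
    f (normalForm a b p) = normalForm (f a) (f b) p := by
  simp only [normalForm, map_mul, map_pow]

theorem a_mul_normalForm (ha : a ^ 4 = 1) (i j : ZMod 4) :
    a * normalForm a b (i, j) = normalForm a b (i + 1, j) := by
  rw [normalForm, normalForm, ← mul_assoc, ← pow_succ',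
    pow_eq_pow_of_natCast_eq ha (m := (i + 1).val) (by simp [add_comm])]

theorem b_mul_normalForm (ha : a ^ 4 = 1) (hb : b ^ 4 = 1) (hab : (a * b) ^ 2 = 1)
    (hab' : (a⁻¹ * b) ^ 2 = 1) (i j : ZMod 4) :
    b * normalForm a b (i, j) = normalForm a b (3 * i, 1 + 2 * i + j) := by
  rw [normalForm, normalForm, ← mul_assoc, mul_pow_eq_pow_mul_pow ha hb hab hab', mul_assoc,
    ← pow_add,
    pow_eq_pow_of_natCast_eq ha (m := (3 * i).val) (by simp),
    pow_eq_pow_of_natCast_eq hb (m := (1 + 2 * i + j).val) (by simp)]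

theorem normalForm_surjective (ha : a ^ 4 = 1) (hb : b ^ 4 = 1) (hab : (a * b) ^ 2 = 1)
    (hab' : (a⁻¹ * b) ^ 2 = 1) (hgen : Subgroup.closure {a, b} = ⊤) :
    Function.Surjective (normalForm a b) := by
  have hmul : ∀ x ∈ ({a, b} : Set G), ∀ y ∈ Set.range (normalForm a b),
      x * y ∈ Set.range (normalForm a b) := by
    rintro x (rfl | rfl) y ⟨⟨i, j⟩, rfl⟩
    · exact ⟨_, (a_mul_normalForm ha i j).symm⟩
    · exact ⟨_, (b_mul_normalForm ha hb hab hab' i j).symm⟩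
  intro g
  induction hgen ▸ Subgroup.mem_top g using Subgroup.closure_induction_left with
  | one => exact ⟨0, by simp [normalForm]⟩
  | mul_left x hx y _ hy => exact hmul x hx y hy
  | inv_mul_cancel x hx y _ hy =>
    have hx4 : x ^ 4 = 1 := by rcases hx with rfl | rfl <;> assumption
    rw [inv_eq_pow_three hx4, pow_succ, pow_two, mul_assoc, mul_assoc]
    exact hmul x hx _ (hmul x hx _ (hmul x hx y hy))

-- `B_2` acting on the cosets of `⟨b * a⟩`, with `a ↦ permA` and `b ↦ permB`.
def permA : Equiv.Perm (Fin 8) :=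
  ⟨![3, 4, 1, 6, 7, 0, 5, 2], ![5, 2, 7, 0, 1, 6, 3, 4], by decide, by decide⟩

def permB : Equiv.Perm (Fin 8) :=
  ⟨![1, 2, 3, 0, 5, 6, 7, 4], ![3, 0, 1, 2, 7, 4, 5, 6], by decide, by decide⟩

theorem lift_perm_rels_eq_one : ∀ r ∈ B2Rels, FreeGroup.lift ![permA, permB] r = 1 := by
  simp only [B2Rels, Set.mem_insert_iff, Set.mem_singleton_iff, forall_eq_or_imp, forall_eq,
    map_pow, map_mul, map_inv, FreeGroup.lift_apply_of, Matrix.cons_val_zero,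
    Matrix.cons_val_one]
  decide

theorem normalForm_perm_injective : Function.Injective (normalForm permA permB) := by
  unfold normalForm
  decide

theorem normalForm_injective_of_map {H : Type*} [Group H] (f : G →* H)
    (h : Function.Injective (normalForm (f a) (f b))) : Function.Injective (normalForm a b) :=
  fun p q hpq => h (by rw [← map_normalForm, ← map_normalForm, hpq])

open PresentedGroup

theorem of_relations :
    (of 0 : PresentedGroup B2Rels) ^ 4 = 1 ∧ (of 1 : PresentedGroup B2Rels) ^ 4 = 1 ∧
      (of 0 * of 1 : PresentedGroup B2Rels) ^ 2 = 1 ∧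
      ((of 0)⁻¹ * of 1 : PresentedGroup B2Rels) ^ 2 = 1 := by
  simp only [of, ← map_pow, ← map_mul, ← map_inv]
  refine ⟨?_, ?_, ?_, ?_⟩ <;> exact one_of_mem (by simp [B2Rels])

theorem closure_of_pair_eq_top :
    Subgroup.closure {(of 0 : PresentedGroup B2Rels), of 1} = ⊤ := by
  rw [← closure_range_of]
  congr 1
  ext
  simp [Fin.exists_fin_two, eq_comm]

theorem normalForm_of_bijective :
    Function.Bijective (normalForm (of 0 : PresentedGroup B2Rels) (of 1)) := by
  obtain ⟨ha, hb, hab, hab'⟩ := of_relations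
  refine ⟨normalForm_injective_of_map (toGroup lift_perm_rels_eq_one) ?_,
    normalForm_surjective ha hb hab hab' closure_of_pair_eq_top⟩
  simpa only [toGroup.of, Matrix.cons_val_zero, Matrix.cons_val_one] using
    normalForm_perm_injective

end B2

theorem stmt_7 : Nat.card (PresentedGroup B2Rels) = 16 := by
  rw [← Nat.card_eq_of_bijective _ B2.normalForm_of_bijective, Nat.card_prod, Nat.card_zmod]
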